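/- In the origami monoid O_n, for indices i, j with |i-j|=1 and any generator type γ ∈ {α, β}, the relation γ̄_i γ_i γ̄_j γ_j γ̄_i = γ̄_i γ_i γ_j holds, where γ̄ denotes the other generator type. -/
import Mathlib


namespace Origami

/-- Generators of the origami monoid: a type bit (`true` for α, `false` for β)
and an index in `Fin (n-1)` (so indices `1,…,n-1` are represented by `0,…,n-2`). -/
inductive Gen (n : ℕ) : Type
  | mk (t : Bool) (i : Fin (n - 1))
deriving DecidableEq

/-- Words over the generators. -/
abbrev W (n : ℕ) := FreeMonoid (Gen n)

/-- The word consisting of the single generator of type `t` and index `i`. -/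
def go {n : ℕ} (t : Bool) (i : Fin (n - 1)) : W n := FreeMonoid.of (Gen.mk t i)

/-- `|i - j| = 1`. -/
def adj {n : ℕ} (i j : Fin (n - 1)) : Prop := i.val + 1 = j.val ∨ j.val + 1 = i.val

/-- `|i - j| ≥ 2`. -/
def far {n : ℕ} (i j : Fin (n - 1)) : Prop := i.val + 2 ≤ j.val ∨ j.val + 2 ≤ i.val

/-- The defining relations (1)–(5), (1a), (2a), (3a) of the origami monoid. -/
inductive Rel (n : ℕ) : W n → W n → Prop
  | idem (t : Bool) (i : Fin (n - 1)) : Rel n (go t i * go t i) (go t i)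
  | jones (t : Bool) (i j : Fin (n - 1)) (h : adj i j) :
      Rel n (go t i * go t j * go t i) (go t i)
  | inter (t : Bool) (i j : Fin (n - 1)) (h : i ≠ j) :
      Rel n (go t i * go (!t) j) (go (!t) j * go t i)
  | intra (t : Bool) (i j : Fin (n - 1)) (h : far i j) :
      Rel n (go t i * go t j) (go t j * go t i)
  | idemA (t : Bool) (i : Fin (n - 1)) :
      Rel n (go t i * go (!t) i * (go t i * go (!t) i)) (go t i * go (!t) i)
  | jonesA (t : Bool) (i j : Fin (n - 1)) (h : adj i j) :
      Rel n (go t i * go (!t) i * (go t j * go (!t) j) * (go t i * go (!t) i))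
            (go t i * go (!t) i)

/-- The congruence generated by the origami relations. -/
def oriCon (n : ℕ) : Con (W n) := conGen (Rel n)

/-- The origami monoid `O_n`. -/
abbrev O (n : ℕ) := (oriCon n).Quotient

/-- The image of a generator in `O_n`. -/
def gen {n : ℕ} (t : Bool) (i : Fin (n - 1)) : O n := (oriCon n).mk' (go t i)

/-- The generator `α_i`. -/
def genA {n : ℕ} (i : Fin (n - 1)) : O n := gen true i

/-- The generator `β_i`. -/
def genB {n : ℕ} (i : Fin (n - 1)) : O n := gen false i

end Origami


open Origami in
lemma origami_adj_ne {n : ℕ} {i j : Fin (n - 1)} (h : adj i j) : i ≠ j := by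
  rcases h with h | h <;> intro e <;> subst e <;> omega

open Origami in
lemma origami_adj_symm {n : ℕ} {i j : Fin (n - 1)} (h : adj i j) : adj j i := h.symm

open Origami in
/-- Lemma (a): `γ̄_i γ_i γ̄_j γ_j γ̄_i = γ̄_i γ_i γ_j` for `|i-j| = 1`. -/
theorem origami_lemma_a (n : ℕ) (t : Bool) (i j : Fin (n - 1)) (hij : adj i j) :
    gen (!t) i * gen t i * gen (!t) j * gen t j * gen (!t) i
      = gen (!t) i * gen t i * gen t j := by
  have hne : j ≠ i := fun e => origami_adj_ne hij e.symm
  have s1 : oriCon n (go t j * go (!t) i) (go (!t) i * go t j) :=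
    ConGen.Rel.of _ _ (Rel.inter t j i hne)
  have s2 : oriCon n (go t j * go t i * go t j) (go t j) :=
    ConGen.Rel.of _ _ (Rel.jones t j i (origami_adj_symm hij))
  have s4' := Rel.jonesA (!t) i j hij
  rw [Bool.not_not] at s4'
  have s4 := ConGen.Rel.of _ _ s4'
  have t1 := ConGen.Rel.mul (ConGen.Rel.refl (go (!t) i * go t i * go (!t) j)) s1
  have t2 := ConGen.Rel.mul
    (ConGen.Rel.refl (go (!t) i * go t i * go (!t) j * go (!t) i)) s2.symm
  have t3 := ConGen.Rel.mul
    (ConGen.Rel.mul (ConGen.Rel.refl (go (!t) i * go t i * go (!t) j)) s1.symm)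
    (ConGen.Rel.refl (go t i * go t j))
  have t4 := ConGen.Rel.mul s4 (ConGen.Rel.refl (go t j))
  simp only [mul_assoc] at t1 t2 t3 t4
  have full : oriCon n
      (go (!t) i * (go t i * (go (!t) j * (go t j * go (!t) i))))
      (go (!t) i * (go t i * go t j)) :=
    ((t1.trans t2).trans t3).trans t4
  have h := (Con.eq _).2 full
  simpa [gen, map_mul, mul_assoc] using h
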